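/- arXiv:1707.06845 — 2 statements merged into one kernel-verified Lean document; each statement's English description precedes it below -/
import Mathlib

section
/- For every random variable X on (Ω,𝓕,P), ∫_{(0,1)} (F^←_X(u))^− dQ(u) = ∫_{(−∞,0)} D(F_X(x)) dλ(x), where λ is Lebesgue measure and (·)^− denotes the negative part (both sides taking values in [0,∞]). -/
open MeasureTheory

/-- The distribution function `F_X(x) = P[X ≤ x]` of a random variable `X`. -/
noncomputable def distFun {Ω : Type*} [MeasurableSpace Ω] (P : Measure Ω) (X : Ω → ℝ) (x : ℝ) : ℝ :=
  (P {ω | X ω ≤ x}).toReal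

/-- The (lower) quantile function `F^←_X(u) = inf {x | F_X(x) ≥ u}`. -/
noncomputable def quantile {Ω : Type*} [MeasurableSpace Ω] (P : Measure Ω) (X : Ω → ℝ) (u : ℝ) : ℝ :=
  sInf {x : ℝ | u ≤ distFun P X x}

/-- A distortion function: an increasing, right-continuous `D : [0,1] → [0,1]`
with `D 0 = 0` and `sup_{u ∈ (0,1)} D u = 1`. -/
structure IsDistortion (D : ℝ → ℝ) : Prop where
  mapsTo : ∀ u ∈ Set.Icc (0:ℝ) 1, D u ∈ Set.Icc (0:ℝ) 1
  mono : ∀ ⦃a b : ℝ⦄, 0 ≤ a → a ≤ b → b ≤ 1 → D a ≤ D b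
  rightCont : ∀ u ∈ Set.Ico (0:ℝ) 1, ContinuousWithinAt D (Set.Icc u 1) u
  zero : D 0 = 0
  sup_one : sSup (D '' Set.Ioo 0 1) = 1

/-- `Q` is the probability measure on the Borel sets of `(0,1)` corresponding to
the distortion function `D`, i.e. `Q (a,b] = D b - D a` for `0 < a ≤ b < 1`. -/
def IsCorresponding (D : ℝ → ℝ) (Q : Measure ℝ) : Prop :=
  IsProbabilityMeasure Q ∧ Q (Set.Ioo (0:ℝ) 1) = 1 ∧
    ∀ a b : ℝ, 0 < a → a ≤ b → b < 1 → Q (Set.Ioc a b) = ENNReal.ofReal (D b - D a)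

/-!
Both sides are the `Q ⊗ λ`-measure of `{(u, x) ∈ (0,1) × (-∞,0) | u ≤ F_X(x)}`. For `u ∈ (0,1)`
right-continuity of `F_X` gives the Galois connection `F^←_X(u) ≤ x ↔ u ≤ F_X(x)`, so the `u`-slice
is `[F^←_X(u), 0)`, of length `(F^←_X(u))⁻`; the `x`-slice is `(0, F_X(x)]`, of `Q`-measure
`D(F_X(x))` by continuity of `Q` from above and right-continuity of `D` at `0`.
-/

open ProbabilityTheory Set Filter Topology

lemma StieltjesFunction.csInf_setOf_le_le_iff (f : StieltjesFunction ℝ) {u x : ℝ}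
    (hne : ∃ y, u ≤ f y) (hbdd : BddBelow {y | u ≤ f y}) :
    sInf {y | u ≤ f y} ≤ x ↔ u ≤ f x := by
  refine ⟨fun h => ?_, fun h => csInf_le hbdd h⟩
  have hright : ∀ y ∈ Ioi x, u ≤ f y := fun y hy => by
    obtain ⟨z, hz, hzy⟩ := exists_lt_of_csInf_lt hne (h.trans_lt hy)
    exact le_trans hz (f.mono hzy.le)
  exact ge_of_tendsto ((f.right_continuous x).mono Ioi_subset_Ici_self)
    (eventually_nhdsWithin_of_forall hright)

lemma ProbabilityTheory.csInf_setOf_le_cdf_le_iff (μ : Measure ℝ) {u x : ℝ}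
    (hu0 : 0 < u) (hu1 : u < 1) :
    sInf {y | u ≤ cdf μ y} ≤ x ↔ u ≤ cdf μ x := by
  refine (cdf μ).csInf_setOf_le_le_iff ?_ ?_
  · obtain ⟨y, hy⟩ := ((tendsto_cdf_atTop μ).eventually (eventually_gt_nhds hu1)).exists
    exact ⟨y, hy.le⟩
  · obtain ⟨a, ha⟩ :=
      eventually_atBot.1 ((tendsto_cdf_atBot μ).eventually (eventually_lt_nhds hu0))
    exact ⟨a, fun y hy => le_of_not_gt fun hya => (ha y hya.le).not_ge hy⟩

lemma lintegral_measure_setOf_le_eq_lintegral_measure_Iic {β : Type*} [MeasurableSpace β]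
    {μ : Measure ℝ} {ν : Measure β} [SFinite μ] [SFinite ν] {f : β → ℝ} (hf : Measurable f) :
    ∫⁻ u, ν {x | u ≤ f x} ∂μ = ∫⁻ x, μ (Iic (f x)) ∂ν := by
  have hS : MeasurableSet {p : ℝ × β | p.1 ≤ f p.2} :=
    measurableSet_le measurable_fst (hf.comp measurable_snd)
  calc ∫⁻ u, ν {x | u ≤ f x} ∂μ = μ.prod ν {p | p.1 ≤ f p.2} := (Measure.prod_apply hS).symm
    _ = ∫⁻ x, μ (Iic (f x)) ∂ν := Measure.prod_apply_symm hS

section DistFun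

variable {Ω : Type*} [MeasurableSpace Ω] (P : Measure Ω) [IsProbabilityMeasure P] {X : Ω → ℝ}

lemma distFun_eq_cdf_map (hX : Measurable X) : distFun P X = cdf (P.map X) := by
  have := Measure.isProbabilityMeasure_map (μ := P) hX.aemeasurable
  funext x
  rw [cdf_eq_real, measureReal_def, Measure.map_apply hX measurableSet_Iic]
  rfl

lemma quantile_le_iff (hX : Measurable X) {u x : ℝ} (hu0 : 0 < u) (hu1 : u < 1) :
    quantile P X u ≤ x ↔ u ≤ distFun P X x := by
  rw [quantile, distFun_eq_cdf_map P hX]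
  exact csInf_setOf_le_cdf_le_iff _ hu0 hu1

lemma volume_restrict_Iio_zero_setOf_le_distFun (hX : Measurable X) {u : ℝ} (hu0 : 0 < u)
    (hu1 : u < 1) :
    volume.restrict (Iio 0) {x | u ≤ distFun P X x} = ENNReal.ofReal (max (-quantile P X u) 0) := by
  have hslice : {x | u ≤ distFun P X x} = Ici (quantile P X u) := by
    ext x
    exact (quantile_le_iff P hX hu0 hu1).symm
  rw [hslice, Measure.restrict_apply measurableSet_Ici, Ici_inter_Iio, Real.volume_Ico]
  simp

end DistFun

section Distortion

variable {D : ℝ → ℝ} {Q : Measure ℝ}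

lemma IsDistortion.apply_one (hD : IsDistortion D) : D 1 = 1 := by
  refine le_antisymm (hD.mapsTo 1 ⟨zero_le_one, le_rfl⟩).2 ?_
  calc (1 : ℝ) = sSup (D '' Ioo 0 1) := hD.sup_one.symm
    _ ≤ D 1 := csSup_le ⟨D (1 / 2), 1 / 2, ⟨by norm_num, by norm_num⟩, rfl⟩
      fun _ ⟨_, hv, hDv⟩ => hDv ▸ hD.mono hv.1.le hv.2.le le_rfl

lemma IsDistortion.tendsto_nhdsGT_zero (hD : IsDistortion D) : Tendsto D (𝓝[>] 0) (𝓝 0) := by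
  have hcont := (hD.rightCont 0 ⟨le_rfl, one_pos⟩).mono_of_mem_nhdsWithin
    (Icc_mem_nhdsGT (zero_lt_one' ℝ))
  simpa [hD.zero] using hcont.tendsto

lemma IsCorresponding.measure_Ioc_zero (hD : IsDistortion D) (hQ : IsCorresponding D Q)
    {b : ℝ} (hb0 : 0 < b) (hb1 : b < 1) : Q (Ioc 0 b) = ENNReal.ofReal (D b) := by
  have := hQ.1
  have hsmall : Tendsto (fun a => Q (Ioc 0 a)) (𝓝[>] 0) (𝓝 0) := by
    have h := tendsto_measure_biInter_gt (μ := Q) (s := fun r => Ioc (0 : ℝ) r) (a := 0)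
      (fun _ _ => nullMeasurableSet_Ioc) (fun _ _ _ hij => Ioc_subset_Ioc_right hij)
      ⟨1, one_pos, measure_ne_top _ _⟩
    have hempty : ⋂ r > (0 : ℝ), Ioc 0 r = ∅ := by
      refine eq_empty_of_forall_notMem fun x hx => ?_
      simp only [mem_iInter, mem_Ioc] at hx
      have hx0 := (hx 1 one_pos).1
      linarith [(hx (x / 2) (half_pos hx0)).2]
    rwa [hempty, measure_empty] at h
  have hsplit : ∀ᶠ a in 𝓝[>] 0, Q (Ioc 0 a) + ENNReal.ofReal (D b - D a) = Q (Ioc 0 b) := by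
    filter_upwards [Ioc_mem_nhdsGT hb0] with a ha
    rw [← hQ.2.2 a b ha.1 ha.2 hb1, ← measure_union (Ioc_disjoint_Ioc_of_le le_rfl)
      measurableSet_Ioc, Ioc_union_Ioc_eq_Ioc ha.1.le ha.2]
  have hlim : Tendsto (fun a => Q (Ioc 0 a) + ENNReal.ofReal (D b - D a)) (𝓝[>] 0)
      (𝓝 (0 + ENNReal.ofReal (D b - 0))) :=
    hsmall.add (ENNReal.tendsto_ofReal (tendsto_const_nhds.sub hD.tendsto_nhdsGT_zero))
  simpa using tendsto_nhds_unique tendsto_const_nhds (hlim.congr' hsplit)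

lemma IsCorresponding.measure_Iic_inter_Ioo (hD : IsDistortion D) (hQ : IsCorresponding D Q)
    {t : ℝ} (ht0 : 0 ≤ t) (ht1 : t ≤ 1) : Q (Iic t ∩ Ioo 0 1) = ENNReal.ofReal (D t) := by
  rcases ht0.eq_or_lt with rfl | ht0
  · have hempty : Iic 0 ∩ Ioo (0 : ℝ) 1 = ∅ := by
      ext x
      simp only [mem_inter_iff, mem_Iic, mem_Ioo, mem_empty_iff_false]
      grind
    rw [hempty, measure_empty, hD.zero, ENNReal.ofReal_zero]
  rcases ht1.eq_or_lt with rfl | ht1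
  · rw [inter_eq_right.2 fun x hx => hx.2.le, hQ.2.1, hD.apply_one, ENNReal.ofReal_one]
  · have hIoc : Iic t ∩ Ioo 0 1 = Ioc 0 t := by
      ext x
      simp only [mem_inter_iff, mem_Iic, mem_Ioo, mem_Ioc]
      grind
    rw [hIoc]
    exact hQ.measure_Ioc_zero hD ht0 ht1

end Distortion

/-- `∫_{(0,1)} (F^←_X(u))⁻ dQ(u) = ∫_{(-∞,0)} D(F_X(x)) dλ(x)` in `[0,∞]`. -/
theorem lintegral_quantile_neg_part {Ω : Type*} [MeasurableSpace Ω]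
    (P : Measure Ω) [IsProbabilityMeasure P] (D : ℝ → ℝ) (Q : Measure ℝ)
    (hD : IsDistortion D) (hQ : IsCorresponding D Q)
    (X : Ω → ℝ) (hX : Measurable X) :
    ∫⁻ u in Set.Ioo (0:ℝ) 1, ENNReal.ofReal (max (-(quantile P X u)) 0) ∂Q
      = ∫⁻ x in Set.Iio (0:ℝ), ENNReal.ofReal (D (distFun P X x)) := by
  have := hQ.1
  have hF := distFun_eq_cdf_map P hX
  calc _ = ∫⁻ u in Ioo 0 1, volume.restrict (Iio 0) {x | u ≤ distFun P X x} ∂Q :=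
        setLIntegral_congr_fun measurableSet_Ioo fun u hu =>
          (volume_restrict_Iio_zero_setOf_le_distFun P hX hu.1 hu.2).symm
    _ = ∫⁻ x in Iio 0, Q.restrict (Ioo 0 1) (Iic (distFun P X x)) :=
        lintegral_measure_setOf_le_eq_lintegral_measure_Iic (hF ▸ (cdf _).mono.measurable)
    _ = _ := setLIntegral_congr_fun measurableSet_Iio fun x _ => by
        rw [Measure.restrict_apply measurableSet_Iic, hF]
        exact hQ.measure_Iic_inter_Ioo hD (cdf_nonneg _ x) (cdf_le_one _ x)
end

section
/- For every α ∈ [0,1), the expected shortfall at level α is subadditive: if X, Y are random variables on (Ω,𝓕,P) with E[X^+] < ∞ and E[Y^+] < ∞, then E[(X+Y)^+] < ∞ and ES_α[X+Y] ≤ ES_α[X] + ES_α[Y]. -/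
open MeasureTheory

/-- The expected shortfall at level `α`:
`ES_α[X] = (1/(1-α)) ∫_{(α,1)} F^←_X(u) dλ(u)`, with values in `EReal`. -/
noncomputable def ES {Ω : Type*} [MeasurableSpace Ω] (P : Measure Ω) (α : ℝ) (X : Ω → ℝ) : EReal :=
  ((1 / (1 - α) : ℝ) : EReal) *
    (((∫⁻ u in Set.Ioo α 1, ENNReal.ofReal (max (quantile P X u) 0)) : EReal)
      - ((∫⁻ u in Set.Ioo α 1, ENNReal.ofReal (max (-(quantile P X u)) 0)) : EReal))

/-! The quantile function of `Z`, restricted to `(0,1)`, pushes Lebesgue measure forward to the law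
of `Z`, so integrals of `g ∘ F^←_Z` over `(0,1)` are expectations of `g(Z)`. For `α > 0` this gives
the Rockafellar–Uryasev representation `ES_α[Z] = min_s (s + E[(Z - s)⁺] / (1 - α))`, attained at
`s = F^←_Z(α)`; subadditivity follows from `(x + y - s - t)⁺ ≤ (x - s)⁺ + (y - t)⁺`.
For `α = 0`, `ES_0[Z] = E[Z⁺] - E[Z⁻]` is additive, or `-∞` on the left when `E[(X + Y)⁻] = ∞`. -/

open Set Filter ProbabilityTheory
open scoped ENNReal

section PositivePart

variable {β : Type*} [MeasurableSpace β] {μ : Measure β}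

theorem integrable_max_zero_of_lintegral_lt_top {f : β → ℝ} (hf : AEMeasurable f μ)
    (h : ∫⁻ x, ENNReal.ofReal (max (f x) 0) ∂μ < ∞) :
    Integrable (fun x => max (f x) 0) μ :=
  (lintegral_ofReal_ne_top_iff_integrable (hf.max aemeasurable_const).aestronglyMeasurable
    (ae_of_all _ fun _ => le_max_right _ _)).1 h.ne

theorem integrable_of_lintegral_max_lt_top {f : β → ℝ} (hf : AEMeasurable f μ)
    (hpos : ∫⁻ x, ENNReal.ofReal (max (f x) 0) ∂μ < ∞)
    (hneg : ∫⁻ x, ENNReal.ofReal (max (-f x) 0) ∂μ < ∞) : Integrable f μ :=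
  ((integrable_max_zero_of_lintegral_lt_top hf hpos).sub
    (integrable_max_zero_of_lintegral_lt_top hf.neg hneg)).congr
    (ae_of_all _ fun x => max_zero_sub_max_neg_zero_eq_self (f x))

theorem lintegral_ofReal_max_zero_le_add {f g h : β → ℝ} (hg : AEMeasurable g μ)
    (hfgh : ∀ x, f x ≤ g x + h x) :
    ∫⁻ x, ENNReal.ofReal (max (f x) 0) ∂μ ≤
      (∫⁻ x, ENNReal.ofReal (max (g x) 0) ∂μ) + ∫⁻ x, ENNReal.ofReal (max (h x) 0) ∂μ := by
  rw [← lintegral_add_left' (hg.max aemeasurable_const).ennreal_ofReal]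
  refine lintegral_mono fun x => le_trans (ENNReal.ofReal_le_ofReal ?_) ENNReal.ofReal_add_le
  exact max_le ((hfgh x).trans (add_le_add (le_max_left _ _) (le_max_left _ _)))
    (add_nonneg (le_max_right _ _) (le_max_right _ _))

theorem lintegral_max_add_zero_lt_top {X Y : β → ℝ} (hX : AEMeasurable X μ)
    (hXpos : ∫⁻ x, ENNReal.ofReal (max (X x) 0) ∂μ < ∞)
    (hYpos : ∫⁻ x, ENNReal.ofReal (max (Y x) 0) ∂μ < ∞) :
    ∫⁻ x, ENNReal.ofReal (max (X x + Y x) 0) ∂μ < ∞ :=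
  (lintegral_ofReal_max_zero_le_add hX fun _ => le_rfl).trans_lt
    (ENNReal.add_lt_top.2 ⟨hXpos, hYpos⟩)

theorem EReal.coe_integral_eq_lintegral_sub {f : β → ℝ} (hf : Integrable f μ) :
    ((∫ x, f x ∂μ : ℝ) : EReal) =
      ((∫⁻ x, ENNReal.ofReal (max (f x) 0) ∂μ : ℝ≥0∞) : EReal) -
        ((∫⁻ x, ENNReal.ofReal (max (-f x) 0) ∂μ : ℝ≥0∞) : EReal) := by
  have hneg : ∫⁻ x, ENNReal.ofReal (-f x) ∂μ ≠ ∞ := hf.neg.lintegral_lt_top.ne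
  simp only [ENNReal.ofReal_max, ENNReal.ofReal_zero, zero_le, max_eq_left]
  rw [integral_eq_lintegral_pos_part_sub_lintegral_neg_part hf, EReal.coe_sub,
    EReal.coe_ennreal_toReal hf.lintegral_lt_top.ne, EReal.coe_ennreal_toReal hneg]

theorem integrable_max_sub_const {f : β → ℝ} [IsFiniteMeasure μ] (hf : AEMeasurable f μ)
    (hf' : Integrable (fun x => max (f x) 0) μ) (s : ℝ) :
    Integrable (fun x => max (f x - s) 0) μ := by
  refine (hf'.add (integrable_const |s|)).mono'
    ((hf.sub_const s).max aemeasurable_const).aestronglyMeasurable (ae_of_all _ fun x => ?_)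
  rw [Real.norm_eq_abs, abs_of_nonneg (le_max_right _ _), Pi.add_apply]
  exact max_le (by linarith [le_max_left (f x) 0, neg_abs_le s])
    (add_nonneg (le_max_right _ _) (abs_nonneg s))

end PositivePart

theorem StieltjesFunction.csInf_le_iff (F : StieltjesFunction ℝ) {u y : ℝ}
    (hne : ∃ x, u ≤ F x) (hlt : ∃ x, F x < u) :
    sInf {x | u ≤ F x} ≤ y ↔ u ≤ F y := by
  obtain ⟨b, hb⟩ := hlt
  have hbdd : BddBelow {x | u ≤ F x} :=
    ⟨b, fun x hx => le_of_not_ge fun hxb => (hb.trans_le hx).not_ge (F.mono hxb)⟩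
  refine ⟨fun hy => ?_, fun hy => csInf_le hbdd hy⟩
  refine le_trans ?_ (F.mono hy)
  refine ge_of_tendsto ((F.right_continuous _).mono Ioi_subset_Ici_self) ?_
  filter_upwards [self_mem_nhdsWithin] with x hx
  obtain ⟨z, hz, hzx⟩ := exists_lt_of_csInf_lt hne hx
  exact le_trans hz (F.mono hzx.le)

section Quantile

variable {Ω : Type*} [MeasurableSpace Ω] {P : Measure Ω} [IsProbabilityMeasure P] {Z : Ω → ℝ}

theorem distFun_eq_cdf (hZ : AEMeasurable Z P) : distFun P Z = cdf (P.map Z) := by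
  have := Measure.isProbabilityMeasure_map hZ
  ext x
  rw [cdf_eq_real, measureReal_def, Measure.map_apply_of_aemeasurable hZ measurableSet_Iic]
  rfl

theorem quantile_le_iff_s16 (hZ : AEMeasurable Z P) {u x : ℝ} (hu : u ∈ Ioo (0 : ℝ) 1) :
    quantile P Z u ≤ x ↔ u ≤ distFun P Z x := by
  rw [quantile, distFun_eq_cdf hZ]
  exact (cdf _).csInf_le_iff ((tendsto_cdf_atTop _).eventually (eventually_ge_nhds hu.2)).exists
    ((tendsto_cdf_atBot _).eventually (eventually_lt_nhds hu.1)).exists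

theorem monotoneOn_quantile (hZ : AEMeasurable Z P) : MonotoneOn (quantile P Z) (Ioo 0 1) :=
  fun _ hu _ hv huv => (quantile_le_iff_s16 hZ hu).2 (huv.trans ((quantile_le_iff_s16 hZ hv).1 le_rfl))

theorem aemeasurable_quantile (hZ : AEMeasurable Z P) :
    AEMeasurable (quantile P Z) (volume.restrict (Ioo 0 1)) :=
  aemeasurable_restrict_of_monotoneOn measurableSet_Ioo (monotoneOn_quantile hZ)

theorem volume_Iic_inter_Ioo_zero_one {c : ℝ} (h1 : c ≤ 1) :
    volume (Iic c ∩ Ioo 0 1) = ENNReal.ofReal c := by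
  rw [measure_congr ((ae_eq_refl (Iic c)).inter Ioo_ae_eq_Ioc), Iic_inter_Ioc_of_le h1,
    Real.volume_Ioc, sub_zero]

theorem map_quantile (hZ : AEMeasurable Z P) :
    (volume.restrict (Ioo 0 1)).map (quantile P Z) = P.map Z := by
  have := Measure.isProbabilityMeasure_map hZ
  refine Measure.ext_of_Iic _ _ fun x => ?_
  have hpre : quantile P Z ⁻¹' Iic x ∩ Ioo 0 1 = Iic (cdf (P.map Z) x) ∩ Ioo 0 1 := by
    ext u
    simp only [mem_inter_iff, mem_preimage, mem_Iic, ← distFun_eq_cdf hZ]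
    exact and_congr_left (quantile_le_iff_s16 hZ)
  rw [Measure.map_apply_of_aemeasurable (aemeasurable_quantile hZ) measurableSet_Iic,
    Measure.restrict_apply' measurableSet_Ioo, hpre,
    volume_Iic_inter_Ioo_zero_one (cdf_le_one _ x), ofReal_cdf]

theorem lintegral_comp_quantile (hZ : AEMeasurable Z P) {g : ℝ → ℝ≥0∞} (hg : Measurable g) :
    ∫⁻ u in Ioo 0 1, g (quantile P Z u) = ∫⁻ ω, g (Z ω) ∂P := by
  rw [← lintegral_map' hg.aemeasurable (aemeasurable_quantile hZ), map_quantile hZ,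
    lintegral_map' hg.aemeasurable hZ]

theorem integral_comp_quantile (hZ : AEMeasurable Z P) {g : ℝ → ℝ} (hg : Measurable g) :
    ∫ u in Ioo 0 1, g (quantile P Z u) = ∫ ω, g (Z ω) ∂P := by
  rw [← integral_map (aemeasurable_quantile hZ) hg.aestronglyMeasurable, map_quantile hZ,
    integral_map hZ hg.aestronglyMeasurable]

theorem integrableOn_comp_quantile (hZ : AEMeasurable Z P) {g : ℝ → ℝ} (hg : Measurable g)
    (hgZ : Integrable (fun ω => g (Z ω)) P) :
    IntegrableOn (fun u => g (quantile P Z u)) (Ioo 0 1) := by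
  rw [IntegrableOn, ← Function.comp_def,
    ← integrable_map_measure hg.aestronglyMeasurable (aemeasurable_quantile hZ), map_quantile hZ]
  exact (integrable_map_measure hg.aestronglyMeasurable hZ).2 hgZ

end Quantile

section ExpectedShortfall

variable {Ω : Type*} [MeasurableSpace Ω] {P : Measure Ω} {Z : Ω → ℝ} {α : ℝ}

theorem ES_eq_of_integrableOn (hq : IntegrableOn (quantile P Z) (Ioo α 1)) :
    ES P α Z = ((1 / (1 - α) * ∫ u in Ioo α 1, quantile P Z u : ℝ) : EReal) := by
  rw [ES, EReal.coe_mul, EReal.coe_integral_eq_lintegral_sub hq]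

theorem setIntegral_Ioo_const_add {f : ℝ → ℝ} (hα : α ≤ 1) (hf : IntegrableOn f (Ioo α 1))
    (s : ℝ) : ∫ u in Ioo α 1, (s + f u) = (1 - α) * s + ∫ u in Ioo α 1, f u := by
  rw [integral_add (integrable_const s) hf, setIntegral_const, Real.volume_real_Ioo_of_le hα,
    smul_eq_mul]

variable [IsProbabilityMeasure P]

theorem quantile_add_max_sub_quantile (hZ : AEMeasurable Z P) (hα : α ∈ Ioo 0 1) {u : ℝ}
    (hu : u ∈ Ioo α 1) :
    quantile P Z α + max (quantile P Z u - quantile P Z α) 0 = quantile P Z u := by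
  rw [max_eq_left (sub_nonneg.2 (monotoneOn_quantile hZ hα ⟨hα.1.trans hu.1, hu.2⟩ hu.1.le)),
    add_sub_cancel]

theorem integrableOn_max_quantile_sub (hZ : AEMeasurable Z P)
    (hZ' : Integrable (fun ω => max (Z ω) 0) P) (hα : 0 ≤ α) (s : ℝ) :
    IntegrableOn (fun u => max (quantile P Z u - s) 0) (Ioo α 1) :=
  (integrableOn_comp_quantile hZ (g := fun x => max (x - s) 0) (by fun_prop)
    (integrable_max_sub_const hZ hZ' s)).mono_set (Ioo_subset_Ioo_left hα)

theorem integrableOn_quantile (hZ : AEMeasurable Z P)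
    (hZ' : Integrable (fun ω => max (Z ω) 0) P) (hα : α ∈ Ioo 0 1) :
    IntegrableOn (quantile P Z) (Ioo α 1) := by
  refine ((integrable_const (quantile P Z α)).add
    (integrableOn_max_quantile_sub hZ hZ' hα.1.le (quantile P Z α))).congr ?_
  filter_upwards [ae_restrict_mem measurableSet_Ioo] with u hu
  exact quantile_add_max_sub_quantile hZ hα hu

theorem setIntegral_max_quantile_sub_le (hZ : AEMeasurable Z P)
    (hZ' : Integrable (fun ω => max (Z ω) 0) P) (hα : 0 ≤ α) (s : ℝ) :
    ∫ u in Ioo α 1, max (quantile P Z u - s) 0 ≤ ∫ ω, max (Z ω - s) 0 ∂P := by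
  rw [← integral_comp_quantile hZ (g := fun x => max (x - s) 0) (by fun_prop)]
  exact setIntegral_mono_set (integrableOn_max_quantile_sub hZ hZ' le_rfl s)
    (ae_of_all _ fun _ => le_max_right _ _) (Ioo_subset_Ioo_left hα).eventuallyLE

theorem setIntegral_max_quantile_sub_quantile (hZ : AEMeasurable Z P) (hα : α ∈ Ioo 0 1) :
    ∫ u in Ioo α 1, max (quantile P Z u - quantile P Z α) 0 =
      ∫ ω, max (Z ω - quantile P Z α) 0 ∂P := by
  rw [← integral_comp_quantile hZ (g := fun x => max (x - quantile P Z α) 0) (by fun_prop)]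
  refine (setIntegral_eq_of_subset_of_forall_sdiff_eq_zero measurableSet_Ioo
    (Ioo_subset_Ioo_left hα.1.le) fun u hu => ?_).symm
  have huα : u ≤ α := le_of_not_gt fun h => hu.2 ⟨h, hu.1.2⟩
  exact max_eq_right (sub_nonpos.2 (monotoneOn_quantile hZ hu.1 hα huα))

theorem setIntegral_quantile_le (hZ : AEMeasurable Z P)
    (hZ' : Integrable (fun ω => max (Z ω) 0) P) (hα : α ∈ Icc 0 1)
    (hq : IntegrableOn (quantile P Z) (Ioo α 1)) (s : ℝ) :
    ∫ u in Ioo α 1, quantile P Z u ≤ (1 - α) * s + ∫ ω, max (Z ω - s) 0 ∂P := by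
  have hpos := integrableOn_max_quantile_sub hZ hZ' hα.1 s
  calc ∫ u in Ioo α 1, quantile P Z u ≤ ∫ u in Ioo α 1, (s + max (quantile P Z u - s) 0) :=
        integral_mono hq ((integrable_const s).add hpos) fun u => by
          linarith [le_max_left (quantile P Z u - s) 0]
    _ = (1 - α) * s + ∫ u in Ioo α 1, max (quantile P Z u - s) 0 :=
        setIntegral_Ioo_const_add hα.2 hpos s
    _ ≤ (1 - α) * s + ∫ ω, max (Z ω - s) 0 ∂P := by
        gcongr
        exact setIntegral_max_quantile_sub_le hZ hZ' hα.1 s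

theorem setIntegral_quantile_eq (hZ : AEMeasurable Z P)
    (hZ' : Integrable (fun ω => max (Z ω) 0) P) (hα : α ∈ Ioo 0 1) :
    ∫ u in Ioo α 1, quantile P Z u =
      (1 - α) * quantile P Z α + ∫ ω, max (Z ω - quantile P Z α) 0 ∂P := by
  rw [← setIntegral_max_quantile_sub_quantile hZ hα,
    ← setIntegral_Ioo_const_add hα.2.le (integrableOn_max_quantile_sub hZ hZ' hα.1.le _)]
  exact setIntegral_congr_fun measurableSet_Ioo fun u hu =>
    (quantile_add_max_sub_quantile hZ hα hu).symm

theorem ES_le_add_mul_integral_max_sub (hZ : AEMeasurable Z P)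
    (hZ' : Integrable (fun ω => max (Z ω) 0) P) (hα : α ∈ Ioo 0 1) (s : ℝ) :
    ES P α Z ≤ ((s + 1 / (1 - α) * ∫ ω, max (Z ω - s) 0 ∂P : ℝ) : EReal) := by
  have hα' : 0 < 1 - α := sub_pos.2 hα.2
  have hq := integrableOn_quantile hZ hZ' hα
  rw [ES_eq_of_integrableOn hq, EReal.coe_le_coe_iff]
  calc 1 / (1 - α) * ∫ u in Ioo α 1, quantile P Z u
      ≤ 1 / (1 - α) * ((1 - α) * s + ∫ ω, max (Z ω - s) 0 ∂P) := by
        gcongr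
        exact setIntegral_quantile_le hZ hZ' (Ioo_subset_Icc_self hα) hq s
    _ = s + 1 / (1 - α) * ∫ ω, max (Z ω - s) 0 ∂P := by
        field_simp

theorem ES_eq_quantile_add_mul_integral_max_sub (hZ : AEMeasurable Z P)
    (hZ' : Integrable (fun ω => max (Z ω) 0) P) (hα : α ∈ Ioo 0 1) :
    ES P α Z =
      ((quantile P Z α + 1 / (1 - α) * ∫ ω, max (Z ω - quantile P Z α) 0 ∂P : ℝ) : EReal) := by
  have hα' : 0 < 1 - α := sub_pos.2 hα.2
  rw [ES_eq_of_integrableOn (integrableOn_quantile hZ hZ' hα), setIntegral_quantile_eq hZ hZ' hα]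
  congr 1
  field_simp

theorem ES_zero_eq_lintegral_sub (hZ : AEMeasurable Z P) :
    ES P 0 Z = ((∫⁻ ω, ENNReal.ofReal (max (Z ω) 0) ∂P : ℝ≥0∞) : EReal) -
      ((∫⁻ ω, ENNReal.ofReal (max (-Z ω) 0) ∂P : ℝ≥0∞) : EReal) := by
  rw [ES, sub_zero, div_one, EReal.coe_one, one_mul,
    lintegral_comp_quantile hZ (g := fun x => ENNReal.ofReal (max x 0)) (by fun_prop),
    lintegral_comp_quantile hZ (g := fun x => ENNReal.ofReal (max (-x) 0)) (by fun_prop)]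

theorem ES_zero_add_le {X Y : Ω → ℝ} (hX : AEMeasurable X P) (hY : AEMeasurable Y P)
    (hXpos : ∫⁻ ω, ENNReal.ofReal (max (X ω) 0) ∂P < ∞)
    (hYpos : ∫⁻ ω, ENNReal.ofReal (max (Y ω) 0) ∂P < ∞) :
    ES P 0 (fun ω => X ω + Y ω) ≤ ES P 0 X + ES P 0 Y := by
  have hXY : AEMeasurable (fun ω => X ω + Y ω) P := hX.add hY
  by_cases hneg : ∫⁻ ω, ENNReal.ofReal (max (-(X ω + Y ω)) 0) ∂P = ∞
  · rw [ES_zero_eq_lintegral_sub hXY, hneg, EReal.coe_ennreal_top, EReal.sub_top]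
    exact bot_le
  have hXneg : ∫⁻ ω, ENNReal.ofReal (max (-X ω) 0) ∂P < ∞ := by
    refine (lintegral_ofReal_max_zero_le_add hXY.neg fun ω => ?_).trans_lt
      (ENNReal.add_lt_top.2 ⟨lt_top_iff_ne_top.2 hneg, hYpos⟩)
    simp only [Pi.neg_apply]
    linarith
  have hYneg : ∫⁻ ω, ENNReal.ofReal (max (-Y ω) 0) ∂P < ∞ := by
    refine (lintegral_ofReal_max_zero_le_add hXY.neg fun ω => ?_).trans_lt
      (ENNReal.add_lt_top.2 ⟨lt_top_iff_ne_top.2 hneg, hXpos⟩)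
    simp only [Pi.neg_apply]
    linarith
  have hXint := integrable_of_lintegral_max_lt_top hX hXpos hXneg
  have hYint := integrable_of_lintegral_max_lt_top hY hYpos hYneg
  have hXYint : Integrable (fun ω => X ω + Y ω) P := hXint.add hYint
  rw [ES_zero_eq_lintegral_sub hXY, ES_zero_eq_lintegral_sub hX, ES_zero_eq_lintegral_sub hY,
    ← EReal.coe_integral_eq_lintegral_sub hXYint, ← EReal.coe_integral_eq_lintegral_sub hXint,
    ← EReal.coe_integral_eq_lintegral_sub hYint, integral_add hXint hYint, EReal.coe_add]

theorem ES_add_le_of_pos {X Y : Ω → ℝ} (hX : AEMeasurable X P) (hY : AEMeasurable Y P)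
    (hXpos : ∫⁻ ω, ENNReal.ofReal (max (X ω) 0) ∂P < ∞)
    (hYpos : ∫⁻ ω, ENNReal.ofReal (max (Y ω) 0) ∂P < ∞) (hα : α ∈ Ioo 0 1) :
    ES P α (fun ω => X ω + Y ω) ≤ ES P α X + ES P α Y := by
  set s := quantile P X α
  set t := quantile P Y α
  have hX' := integrable_max_zero_of_lintegral_lt_top hX hXpos
  have hY' := integrable_max_zero_of_lintegral_lt_top hY hYpos
  have hXY' := integrable_max_zero_of_lintegral_lt_top (hX.add hY)
    (lintegral_max_add_zero_lt_top hX hXpos hYpos)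
  have hsplit : ∫ ω, max (X ω + Y ω - (s + t)) 0 ∂P ≤
      ∫ ω, max (X ω - s) 0 ∂P + ∫ ω, max (Y ω - t) 0 ∂P := by
    rw [← integral_add (integrable_max_sub_const hX hX' s) (integrable_max_sub_const hY hY' t)]
    refine integral_mono_of_nonneg (ae_of_all _ fun _ => le_max_right _ _)
      ((integrable_max_sub_const hX hX' s).add (integrable_max_sub_const hY hY' t))
      (ae_of_all _ fun ω => max_le ?_ (by positivity))
    linarith [le_max_left (X ω - s) 0, le_max_left (Y ω - t) 0]
  have hc : 0 ≤ 1 / (1 - α) := one_div_nonneg.2 (sub_nonneg.2 hα.2.le)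
  calc ES P α (fun ω => X ω + Y ω)
      ≤ ((s + t + 1 / (1 - α) * ∫ ω, max (X ω + Y ω - (s + t)) 0 ∂P : ℝ) : EReal) :=
        ES_le_add_mul_integral_max_sub (hX.add hY) hXY' hα (s + t)
    _ ≤ ((s + 1 / (1 - α) * ∫ ω, max (X ω - s) 0 ∂P +
          (t + 1 / (1 - α) * ∫ ω, max (Y ω - t) 0 ∂P) : ℝ) : EReal) := by
        rw [EReal.coe_le_coe_iff]
        linarith [mul_le_mul_of_nonneg_left hsplit hc]
    _ = ES P α X + ES P α Y := by
        rw [ES_eq_quantile_add_mul_integral_max_sub hX hX' hα,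
          ES_eq_quantile_add_mul_integral_max_sub hY hY' hα, EReal.coe_add]

end ExpectedShortfall

/-- For every `α ∈ [0,1)`, expected shortfall at level `α` is subadditive: if
`E[X⁺] < ∞` and `E[Y⁺] < ∞`, then `E[(X+Y)⁺] < ∞` and `ES_α[X+Y] ≤ ES_α[X] + ES_α[Y]`. -/
theorem ES_subadditive {Ω : Type*} [MeasurableSpace Ω]
    (P : Measure Ω) [IsProbabilityMeasure P]
    (α : ℝ) (hα : α ∈ Set.Ico (0:ℝ) 1) (X Y : Ω → ℝ)
    (hX : Measurable X) (hY : Measurable Y)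
    (hXpos : (∫⁻ ω, ENNReal.ofReal (max (X ω) 0) ∂P) < ⊤)
    (hYpos : (∫⁻ ω, ENNReal.ofReal (max (Y ω) 0) ∂P) < ⊤) :
    (∫⁻ ω, ENNReal.ofReal (max (X ω + Y ω) 0) ∂P) < ⊤ ∧
      ES P α (fun ω => X ω + Y ω) ≤ ES P α X + ES P α Y := by
  refine ⟨lintegral_max_add_zero_lt_top hX.aemeasurable hXpos hYpos, ?_⟩
  rcases hα.1.eq_or_lt with rfl | hα₀
  · exact ES_zero_add_le hX.aemeasurable hY.aemeasurable hXpos hYpos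
  · exact ES_add_le_of_pos hX.aemeasurable hY.aemeasurable hXpos hYpos ⟨hα₀, hα.2⟩
end
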